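/- arXiv:1202.0199 — 6 statements merged into one kernel-verified Lean document; each statement's English description precedes it below -/
import Mathlib

section
/- For integers 0 < m < n, the cyclotomic polynomial Φ_n(q) divides the q-binomial coefficient binom(n,m)_q in ℤ[q]. -/
/-!
Clearing denominators, `binom(n,m)_q · ∏_{i=1}^{m} (q^i - 1) = ∏_{i=n-m+1}^{n} (q^i - 1)`.
The right side contains the factor `q^n - 1`, so `Φ_n` divides it. `Φ_n` is irreducible, hence
prime in the UFD `ℤ[q]`, and it divides no `q^i - 1` with `0 < i < n`: a primitive `n`-th root of
unity would then be an `i`-th root of unity. So `Φ_n` must divide `binom(n,m)_q`.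
-/

open Polynomial Finset

/-- The Gaussian (q-)binomial coefficient as a polynomial, satisfying the
product formula `∏_{i=n-m+1}^{n}(1-q^i) / ∏_{i=1}^{m}(1-q^i)`. -/
noncomputable def qbinom (R : Type*) [CommRing R] : ℕ → ℕ → Polynomial R
  | _, 0 => 1
  | 0, _+1 => 0
  | n+1, m+1 => qbinom R n (m+1) + X ^ (n - m) * qbinom R n m

section
variable {R : Type*} [CommRing R]

@[simp] lemma qbinom_zero_right (n : ℕ) : qbinom R n 0 = 1 := by
  cases n <;> rfl

lemma qbinom_succ_succ (n m : ℕ) :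
    qbinom R (n + 1) (m + 1) = qbinom R n (m + 1) + X ^ (n - m) * qbinom R n m := rfl

lemma qbinom_of_lt : ∀ {n m : ℕ}, n < m → qbinom R n m = 0
  | 0, _ + 1, _ => rfl
  | n + 1, m + 1, h => by
    rw [qbinom_succ_succ, qbinom_of_lt (by omega), qbinom_of_lt (by omega), mul_zero, add_zero]

@[simp] lemma qbinom_self (n : ℕ) : qbinom R n n = 1 := by
  induction n with
  | zero => rfl
  | succ n ih =>
    rw [qbinom_succ_succ, qbinom_of_lt (by omega), ih, Nat.sub_self, pow_zero, mul_one, zero_add]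

theorem qbinom_mul_prod_X_pow_sub_one {n m : ℕ} (h : m ≤ n) :
    qbinom R n m * ∏ i ∈ Ioc 0 m, (X ^ i - 1) = ∏ i ∈ Ioc (n - m) n, (X ^ i - 1) := by
  induction n generalizing m with
  | zero => simp [Nat.le_zero.mp h]
  | succ n ih =>
    rcases m with _ | m
    · simp
    rcases h.eq_or_lt with h | h
    · rw [h, qbinom_self, Nat.sub_self, one_mul]
    have hbot : ∏ i ∈ Ioc (n - (m + 1)) n, (X ^ i - 1 : R[X]) =
        (X ^ (n - m) - 1) * ∏ i ∈ Ioc (n - m) n, (X ^ i - 1) := by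
      rw [← Icc_add_one_left_eq_Ioc, show n - (m + 1) + 1 = n - m by omega,
        Icc_eq_cons_Ioc (Nat.sub_le n m), prod_cons]
    have hpow : (X : R[X]) ^ (n - m) * X ^ (m + 1) = X ^ (n + 1) := by
      rw [← pow_add]; congr 1; omega
    rw [qbinom_succ_succ, Nat.add_sub_add_right, prod_Ioc_succ_top (Nat.sub_le n m), add_mul,
      ih (by omega), hbot, prod_Ioc_succ_top (Nat.zero_le m)]
    linear_combination (X : R[X]) ^ (n - m) * (X ^ (m + 1) - 1) * ih (by omega : m ≤ n) +
      (∏ i ∈ Ioc (n - m) n, ((X : R[X]) ^ i - 1)) * hpow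

end

theorem dvd_of_cyclotomic_dvd_X_pow_sub_one {n i : ℕ} (hn : 0 < n)
    (h : cyclotomic n ℤ ∣ X ^ i - 1) : n ∣ i := by
  have hζ := Complex.isPrimitiveRoot_exp n hn.ne'
  have hC : cyclotomic n ℂ ∣ X ^ i - 1 := by simpa using map_dvd (Int.castRingHom ℂ) h
  refine hζ.dvd_of_pow_eq_one i ?_
  simpa [sub_eq_zero] using ((hζ.isRoot_cyclotomic hn).dvd hC).eq_zero

theorem cyclotomic_not_dvd_prod_X_pow_sub_one {n : ℕ} (hn : 0 < n) {s : Finset ℕ}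
    (hs : ∀ i ∈ s, ¬ n ∣ i) : ¬ cyclotomic n ℤ ∣ ∏ i ∈ s, (X ^ i - 1) := by
  rw [(cyclotomic.irreducible hn).prime.dvd_finsetProd_iff]
  rintro ⟨i, hi, hdvd⟩
  exact hs i hi (dvd_of_cyclotomic_dvd_X_pow_sub_one hn hdvd)

theorem cyclotomic_dvd_qbinom (n m : ℕ) (h0 : 0 < m) (hmn : m < n) :
    Polynomial.cyclotomic n ℤ ∣ qbinom ℤ n m := by
  have hn : 0 < n := h0.trans hmn
  have hnum : cyclotomic n ℤ ∣ qbinom ℤ n m * ∏ i ∈ Ioc 0 m, (X ^ i - 1) := by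
    rw [qbinom_mul_prod_X_pow_sub_one hmn.le]
    exact (cyclotomic.dvd_X_pow_sub_one n ℤ).trans
      (dvd_prod_of_mem _ (mem_Ioc.2 ⟨by omega, le_rfl⟩))
  have hden : ¬ cyclotomic n ℤ ∣ ∏ i ∈ Ioc 0 m, (X ^ i - 1) :=
    cyclotomic_not_dvd_prod_X_pow_sub_one hn fun i hi hni ↦ by
      rw [mem_Ioc] at hi
      exact absurd (Nat.le_of_dvd hi.1 hni) (by omega)
  exact ((cyclotomic.irreducible hn).prime.dvd_or_dvd hnum).resolve_right hden
end

section
/- (q-Chu-Vandermonde) For integers 0 ≤ t ≤ n, any commutative ring R, any element ζ ∈ R, and any polynomial P ∈ R[x], one has ∑_{m=0}^{n} ζ^m P(m) binom(n,m)_q = ∑_{m=0}^{n-t} ∑_{j=0}^{t} ζ^m ζ^{t-j} P(m+t-j) q^{jm} binom(t,j)_q binom(n-t,m)_q in R[q]. -/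
open Polynomial Finset

namespace qbinom

variable {R : Type*} [CommRing R]

@[simp]
lemma zero_right (n : ℕ) : qbinom R n 0 = 1 := by
  cases n <;> rfl

lemma succ_succ (n m : ℕ) :
    qbinom R (n + 1) (m + 1) = qbinom R n (m + 1) + X ^ (n - m) * qbinom R n m :=
  rfl

lemma eq_zero_of_lt : ∀ {n m : ℕ}, n < m → qbinom R n m = 0
  | 0, _ + 1, _ => rfl
  | n + 1, m + 1, h => by
    rw [succ_succ, eq_zero_of_lt (by omega : n < m + 1), eq_zero_of_lt (by omega : n < m),
      mul_zero, add_zero]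

lemma one_sub_X_pow_mul_succ_right : ∀ n m : ℕ,
    (1 - X ^ (m + 1)) * qbinom R n (m + 1) = (1 - X ^ (n - m)) * qbinom R n m
  | 0, m => by simp [eq_zero_of_lt (Nat.succ_pos m)]
  | n + 1, 0 => by
    have ih := one_sub_X_pow_mul_succ_right n 0
    simp only [succ_succ, zero_add, pow_one, Nat.sub_zero, zero_right, mul_one] at ih ⊢
    linear_combination ih
  | n + 1, k + 1 => by
    obtain hnk | ⟨d, rfl⟩ : n < k + 1 ∨ ∃ d, n = k + 1 + d :=
      (lt_or_ge n (k + 1)).imp id fun h => ⟨n - (k + 1), by omega⟩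
    · rw [eq_zero_of_lt (by omega : n + 1 < k + 2), Nat.sub_eq_zero_of_le hnk]
      simp
    have ih₁ := one_sub_X_pow_mul_succ_right (k + 1 + d) (k + 1)
    have ih₂ := one_sub_X_pow_mul_succ_right (k + 1 + d) k
    simp only [succ_succ, show k + 1 + d - (k + 1) = d by omega,
      show k + 1 + d - k = d + 1 by omega, show k + 1 + d + 1 - (k + 1) = d + 1 by omega]
      at ih₁ ih₂ ⊢
    linear_combination ih₁ + X ^ (d + 1) * ih₂

lemma succ_succ' (n m : ℕ) :
    qbinom R (n + 1) (m + 1) = X ^ (m + 1) * qbinom R n (m + 1) + qbinom R n m := by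
  rw [succ_succ]
  linear_combination one_sub_X_pow_mul_succ_right (R := R) n m

section Weighted

variable (c : ℕ → R[X]) (N : ℕ)

lemma sum_range_succ_mul :
    ∑ k ∈ range (N + 2), c k * qbinom R N k = ∑ k ∈ range (N + 1), c k * qbinom R N k := by
  rw [sum_range_succ, eq_zero_of_lt (Nat.lt_succ_self N), mul_zero, add_zero]

lemma sum_range_mul_shift :
    ∑ k ∈ range (N + 1), c k * qbinom R N k =
      ∑ k ∈ range (N + 1), c (k + 1) * qbinom R N (k + 1) + c 0 := by
  rw [← sum_range_succ_mul, sum_range_succ', zero_right, mul_one]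

lemma sum_range_mul_succ :
    ∑ k ∈ range (N + 2), c k * qbinom R (N + 1) k =
      ∑ k ∈ range (N + 1), (c k + X ^ (N - k) * c (k + 1)) * qbinom R N k := by
  simp_rw [sum_range_succ' _ (N + 1), succ_succ, zero_right, add_mul, sum_add_distrib,
    sum_range_mul_shift c N, mul_add, sum_add_distrib]
  simp only [mul_left_comm, mul_assoc]
  ring

lemma sum_range_mul_succ' :
    ∑ k ∈ range (N + 2), c k * qbinom R (N + 1) k =
      ∑ k ∈ range (N + 1), (X ^ k * c k + c (k + 1)) * qbinom R N k := by
  simp_rw [sum_range_succ' _ (N + 1), succ_succ', zero_right, add_mul, sum_add_distrib,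
    sum_range_mul_shift (fun k => X ^ k * c k) N, mul_add, sum_add_distrib]
  simp only [mul_left_comm, mul_assoc, pow_zero, one_mul]
  ring

end Weighted

theorem sum_range_mul_add (a b : ℕ) (c : ℕ → R[X]) :
    ∑ k ∈ range (a + b + 1), c k * qbinom R (a + b) k =
      ∑ l ∈ range (b + 1), ∑ j ∈ range (a + 1),
        c (l + (a - j)) * X ^ (j * l) * qbinom R a j * qbinom R b l := by
  induction a generalizing c with
  | zero => simp
  | succ a ih =>
    rw [show a + 1 + b = a + b + 1 by omega, sum_range_mul_succ', ih]
    refine sum_congr rfl fun l _ => ?_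
    simp_rw [← sum_mul]
    rw [sum_range_mul_succ (fun j => c (l + (a + 1 - j)) * X ^ (j * l))]
    refine congrArg (· * _) (sum_congr rfl fun j hj => ?_)
    have hj : j ≤ a := Nat.lt_succ_iff.mp (mem_range.mp hj)
    rw [show a + 1 - j = a - j + 1 by omega, show a + 1 - (j + 1) = a - j by omega, ← add_assoc]
    ring

end qbinom

/-- A q-analog of the Chu–Vandermonde identity. -/
theorem q_chu_vandermonde {R : Type*} [CommRing R] (ζ : R) (P : Polynomial R)
    (t n : ℕ) (ht : t ≤ n) :
    ∑ m ∈ Finset.range (n + 1), C (ζ ^ m * P.eval (m : R)) * qbinom R n m =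
      ∑ m ∈ Finset.range (n - t + 1), ∑ j ∈ Finset.range (t + 1),
        C (ζ ^ m * ζ ^ (t - j) * P.eval ((m + (t - j) : ℕ) : R)) * X ^ (j * m) *
          qbinom R t j * qbinom R (n - t) m := by
  obtain ⟨b, rfl⟩ := Nat.exists_eq_add_of_le ht
  simp_rw [Nat.add_sub_cancel_left, ← pow_add]
  exact qbinom.sum_range_mul_add t b fun k => C (ζ ^ k * P.eval (k : R))
end

section
/- Let c ≥ 1 be an integer, k an odd positive integer, ζ a primitive 2c-th root of unity, z ≥ 0 an integer, and P ∈ ℤ[ζ][x]. If n ≥ (deg(P)+1)·kc, then Φ_{kc}(q) divides ∑_{m=0}^{n} ζ^m P(m) q^{zm} binom(n,m)_q in ℤ[ζ][q]. -/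
/-!
Work modulo `Φ = Φ_d` with `d = kc`, i.e. at a primitive `d`-th root of unity `q`. There
`q ^ d = 1` and `[d, m]_q = 0` for `0 < m < d` (the factor `1 - q ^ d` of the numerator of the
product formula vanishes, no factor of the denominator does), so the `q`-Pascal rule gives the
`q`-Lucas congruence `[n + d, m]_q ≡ [n, m]_q + [n, m - d]_q`. Since `ζ ^ d = -1`, splitting
the sum `S(P, n + d)` along this congruence yields `S(P, n + d) ≡ S(P - P(· + d), n)`. The
difference operator lowers the degree of `P`, so `deg P + 1` such steps reduce `P` to `0`.
-/

open Polynomial Finset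

/-- The subring ℤ[ζ] of ℂ. -/
noncomputable abbrev Zadj (ζ : ℂ) : Type := Algebra.adjoin ℤ ({ζ} : Set ℂ)

/-- ζ as an element of ℤ[ζ]. -/
noncomputable def zeta (ζ : ℂ) : Zadj ζ := ⟨ζ, Algebra.self_mem_adjoin_singleton ℤ ζ⟩

section QBinomial

variable {R : Type*} [CommRing R]

lemma qbinom_eq_zero_of_lt {n m : ℕ} (h : n < m) : qbinom R n m = 0 := by
  induction n generalizing m with
  | zero => obtain ⟨m, rfl⟩ := Nat.exists_eq_add_of_lt h; rfl
  | succ n ih =>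
    obtain ⟨m, rfl⟩ : ∃ m', m = m' + 1 := ⟨m - 1, by omega⟩
    rw [qbinom_succ_succ, ih (by omega), ih (by omega), mul_zero, add_zero]

lemma map_qbinom {S : Type*} [CommRing S] (f : R →+* S) (n m : ℕ) :
    (qbinom R n m).map f = qbinom S n m := by
  induction n generalizing m with
  | zero => cases m <;> simp [qbinom]
  | succ n ih => cases m <;> simp [qbinom_succ_succ, ih]

lemma qbinom_mul_prod_one_sub_X_pow (n m : ℕ) :
    qbinom R n m * ∏ i ∈ range m, (1 - X ^ (i + 1)) = ∏ i ∈ range m, (1 - X ^ (n - i)) := by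
  induction n generalizing m with
  | zero =>
    cases m with
    | zero => simp
    | succ m => simp [qbinom_eq_zero_of_lt, prod_range_succ']
  | succ n ih =>
    cases m with
    | zero => simp
    | succ m =>
      rw [prod_range_succ' (fun i => 1 - X ^ (n + 1 - i)), prod_range_succ, qbinom_succ_succ]
      simp only [Nat.add_sub_add_right, Nat.sub_zero]
      rcases le_or_gt m n with hmn | hnm
      · have hpow : (X : R[X]) ^ (n - m) * X ^ (m + 1) = X ^ (n + 1) := by
          rw [← pow_add]; congr 1; omega
        have ih' := ih (m + 1)
        rw [prod_range_succ, prod_range_succ] at ih'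
        linear_combination (1 - X ^ (m + 1)) * (X : R[X]) ^ (n - m) * ih m + ih'
          - (∏ i ∈ range m, (1 - (X : R[X]) ^ (n - i))) * hpow
      · have hzero : ∏ i ∈ range m, (1 - (X : R[X]) ^ (n - i)) = 0 :=
          prod_eq_zero (mem_range.2 hnm) (by simp)
        rw [hzero, qbinom_eq_zero_of_lt hnm, qbinom_eq_zero_of_lt (by omega)]
        simp

end QBinomial

lemma isRoot_qbinom_of_isPrimitiveRoot {K : Type*} [CommRing K] [IsDomain K] {μ : K}
    {d m : ℕ} (hμ : IsPrimitiveRoot μ d) (h0 : 0 < m) (hm : m < d) :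
    (qbinom K d m).IsRoot μ := by
  have key := congrArg (eval μ) (qbinom_mul_prod_one_sub_X_pow (R := K) d m)
  simp only [eval_mul, eval_prod, eval_sub, eval_one, eval_pow, eval_X] at key
  have hnum : ∏ i ∈ range m, (1 - μ ^ (d - i)) = 0 :=
    prod_eq_zero (mem_range.2 h0) (by rw [Nat.sub_zero, hμ.pow_eq_one, sub_self])
  have hden : ∏ i ∈ range m, (1 - μ ^ (i + 1)) ≠ 0 :=
    prod_ne_zero_iff.2 fun i hi =>
      sub_ne_zero.2 (hμ.pow_ne_one_of_pos_of_lt i.succ_ne_zero (by grind)).symm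
  exact (mul_eq_zero.1 (key.trans hnum)).resolve_right hden

lemma cyclotomic_dvd_qbinom_complex {d m : ℕ} (h0 : 0 < m) (hm : m < d) :
    cyclotomic d ℂ ∣ qbinom ℂ d m := by
  have hd : d ≠ 0 := by omega
  rw [cyclotomic_eq_prod_X_sub_primitiveRoots (Complex.isPrimitiveRoot_exp d hd)]
  refine prod_dvd_of_coprime
    (fun a _ b _ hab => pairwise_coprime_X_sub_C Function.injective_id hab) fun μ hμ => ?_
  exact dvd_iff_isRoot.2 <|
    isRoot_qbinom_of_isPrimitiveRoot ((mem_primitiveRoots (by omega)).1 hμ) h0 hm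

lemma cyclotomic_dvd_qbinom_s9 (R : Type*) [CommRing R] {d m : ℕ} (h0 : 0 < m) (hm : m < d) :
    cyclotomic d R ∣ qbinom R d m := by
  have hℤ : cyclotomic d ℤ ∣ qbinom ℤ d m := by
    rw [← map_dvd_map (Int.castRingHom ℂ) Int.cast_injective (cyclotomic.monic d ℤ),
      map_cyclotomic, map_qbinom]
    exact cyclotomic_dvd_qbinom_complex h0 hm
  simpa only [map_cyclotomic, map_qbinom] using Polynomial.map_dvd (Int.castRingHom R) hℤ

lemma degree_sub_taylor_lt {R : Type*} [CommRing R] {P : R[X]} (hP : P ≠ 0) (r : R) :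
    (P - taylor r P).degree < P.degree :=
  degree_sub_lt_left (degree_taylor P r).symm hP (leadingCoeff_taylor r P).symm

lemma IsPrimitiveRoot.pow_mul_eq_neg_one_of_odd {R : Type*} [CommRing R] [NoZeroDivisors R]
    {ζ : R} {c k : ℕ} (hζ : IsPrimitiveRoot ζ (2 * c)) (hc : c ≠ 0) (hk : Odd k) :
    ζ ^ (k * c) = -1 := by
  have hζc : IsPrimitiveRoot (ζ ^ c) 2 := by
    simpa [hc] using hζ.pow_of_dvd hc (dvd_mul_left c 2)
  rw [mul_comm, pow_mul, hζc.eq_neg_one_of_two_right, hk.neg_one_pow]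

section RootOfUnity

variable {R A : Type*} [CommRing R] [CommRing A] (f : R[X] →+* A) {d : ℕ}

lemma pow_mul_map_qbinom_eq (hX : f X ^ d = 1) {n m a b : ℕ} (h : m ≤ n → a = b + d) :
    f X ^ a * f (qbinom R n m) = f X ^ b * f (qbinom R n m) := by
  rcases le_or_gt m n with hmn | hnm
  · rw [h hmn, pow_add, hX, mul_one]
  · rw [qbinom_eq_zero_of_lt hnm, map_zero, mul_zero, mul_zero]

lemma map_qbinom_add_period (hd : 0 < d) (hX : f X ^ d = 1)
    (hq : ∀ m, 0 < m → m < d → f (qbinom R d m) = 0) (n : ℕ) :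
    (∀ m < d, f (qbinom R (n + d) m) = f (qbinom R n m)) ∧
      ∀ m, f (qbinom R (n + d) (m + d)) = f (qbinom R n (m + d)) + f (qbinom R n m) := by
  obtain ⟨e, rfl⟩ : ∃ e, d = e + 1 := ⟨d - 1, by omega⟩
  induction n with
  | zero =>
    refine ⟨fun m hm => ?_, fun m => ?_⟩
    · rcases Nat.eq_zero_or_pos m with rfl | h0
      · simp
      · rw [zero_add, hq m h0 hm, qbinom_eq_zero_of_lt h0, map_zero]
    · rcases Nat.eq_zero_or_pos m with rfl | h0
      · simp [qbinom_eq_zero_of_lt]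
      · simp [qbinom_eq_zero_of_lt, h0]
  | succ n ih =>
    obtain ⟨ih₁, ih₂⟩ := ih
    have hsucc : n + 1 + (e + 1) = n + (e + 1) + 1 := by omega
    refine ⟨fun m hm => ?_, fun m => ?_⟩
    · rcases m with _ | m
      · simp
      rw [hsucc, qbinom_succ_succ, qbinom_succ_succ]
      simp only [map_add, map_mul, map_pow]
      linear_combination ih₁ (m + 1) hm + f X ^ (n + (e + 1) - m) * ih₁ m (by omega)
        + pow_mul_map_qbinom_eq f hX (n := n) (m := m) (a := n + (e + 1) - m) (b := n - m)
          (by omega)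
    · rw [hsucc, show m + (e + 1) = m + e + 1 by omega, qbinom_succ_succ, qbinom_succ_succ]
      rcases m with _ | m
      · have h₂ := ih₂ 0
        simp only [zero_add, qbinom_zero_right, map_add, map_mul, map_pow, map_one] at h₂ ⊢
        linear_combination h₂ + f X ^ (n + (e + 1) - e) * ih₁ e (by omega)
          + pow_mul_map_qbinom_eq f hX (n := n) (m := e) (a := n + (e + 1) - e) (b := n - e)
            (by omega)
      · rw [qbinom_succ_succ, show m + 1 + e = m + (e + 1) by omega,
          show n + (e + 1) - (m + (e + 1)) = n - m by omega]
        simp only [map_add, map_mul, map_pow]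
        have h₂ := ih₂ (m + 1)
        rw [show m + 1 + (e + 1) = m + (e + 1) + 1 by omega] at h₂
        linear_combination h₂ + f X ^ (n - m) * ih₂ m
          + pow_mul_map_qbinom_eq f hX (n := n) (m := m + (e + 1)) (a := n - m)
            (b := n - (m + (e + 1))) (by omega)

noncomputable def qbinomSum (w : R) (z : ℕ) (P : R[X]) (n : ℕ) : R[X] :=
  ∑ m ∈ range (n + 1), C (w ^ m * P.eval (m : R)) * X ^ (z * m) * qbinom R n m

variable (w : R) (z : ℕ)

@[simp]
lemma qbinomSum_zero (n : ℕ) : qbinomSum w z 0 n = 0 := by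
  simp [qbinomSum]

lemma qbinomSum_sub (P Q : R[X]) (n : ℕ) :
    qbinomSum w z (P - Q) n = qbinomSum w z P n - qbinomSum w z Q n := by
  simp only [qbinomSum, ← sum_sub_distrib, eval_sub, mul_sub, map_sub, sub_mul]

lemma qbinomSum_eq_sum_range {n N : ℕ} (h : n + 1 ≤ N) (P : R[X]) :
    qbinomSum w z P n =
      ∑ m ∈ range N, C (w ^ m * P.eval (m : R)) * X ^ (z * m) * qbinom R n m :=
  sum_subset (range_subset_range.2 h) fun m _ hm => by
    rw [qbinom_eq_zero_of_lt (by simpa using hm), mul_zero]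

lemma map_qbinomSum_add_period (hd : 0 < d) (hX : f X ^ d = 1)
    (hq : ∀ m, 0 < m → m < d → f (qbinom R d m) = 0) (hw : w ^ d = -1) (P : R[X]) (n : ℕ) :
    f (qbinomSum w z P (n + d)) = f (qbinomSum w z (P - taylor (d : R) P) n) := by
  set t : R[X] → ℕ → A := fun Q m => f (C (w ^ m * Q.eval (m : R)) * X ^ (z * m)) with ht
  have hsum : ∀ {k N} Q, k + 1 ≤ N →
      f (qbinomSum w z Q k) = ∑ m ∈ range N, t Q m * f (qbinom R k m) := fun Q h => by
    rw [qbinomSum_eq_sum_range w z h, map_sum]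
    exact sum_congr rfl fun m _ => map_mul f _ _
  have hshift : ∀ i, t P (d + i) = -t (taylor (d : R) P) i := fun i => by
    have hXz : f X ^ (z * d) = 1 := by rw [mul_comm, pow_mul, hX, one_pow]
    have hwf : f (C w) ^ d = -1 := by
      rw [← map_pow, ← map_pow, hw, map_neg, map_one, map_neg, map_one]
    simp only [ht, taylor_eval, map_mul, map_pow, pow_add, mul_add, hXz, hwf, Nat.cast_add,
      add_comm (i : R)]
    ring
  obtain ⟨hlow, hhigh⟩ := map_qbinom_add_period f hd hX hq n
  calc f (qbinomSum w z P (n + d))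
      = ∑ m ∈ range d, t P m * f (qbinom R (n + d) m)
          + ∑ i ∈ range (n + 1), t P (d + i) * f (qbinom R (n + d) (i + d)) := by
        rw [hsum P (N := d + (n + 1)) (by omega), sum_range_add _ d (n + 1)]
        simp only [add_comm d]
    _ = ∑ m ∈ range (d + (n + 1)), t P m * f (qbinom R n m)
          + ∑ i ∈ range (n + 1), t P (d + i) * f (qbinom R n i) := by
        rw [sum_range_add _ d (n + 1), add_assoc, ← sum_add_distrib]
        simp only [hhigh, mul_add, add_comm d]
        rw [sum_congr rfl fun m hm => by rw [hlow m (mem_range.1 hm)]]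
    _ = f (qbinomSum w z (P - taylor (d : R) P) n) := by
        rw [qbinomSum_sub, map_sub, hsum P (N := d + (n + 1)) (by omega), hsum _ le_rfl,
          sub_eq_add_neg, ← sum_neg_distrib]
        simp only [hshift, neg_mul]

lemma map_qbinomSum_eq_zero (hd : 0 < d) (hX : f X ^ d = 1)
    (hq : ∀ m, 0 < m → m < d → f (qbinom R d m) = 0) (hw : w ^ d = -1)
    {D : ℕ} {P : R[X]} (hP : P.degree < D) {n : ℕ} (hn : D * d ≤ n) :
    f (qbinomSum w z P n) = 0 := by
  induction D generalizing P n with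
  | zero => simp [by simpa using hP]
  | succ D ih =>
    obtain ⟨n, rfl⟩ : ∃ n', n = n' + d := ⟨n - d, by rw [add_mul] at hn; omega⟩
    rw [map_qbinomSum_add_period f w z hd hX hq hw]
    refine ih ?_ (by rw [add_mul] at hn; omega)
    by_cases hP0 : P = 0
    · simp [hP0]
    · exact (degree_sub_taylor_lt hP0 _).trans_le (Order.le_of_lt_succ hP)

end RootOfUnity

theorem first_order_vanishing_general_general (c k : ℕ) (hc : 1 ≤ c) (hk : Odd k)
    (ζ : ℂ) (hζ : IsPrimitiveRoot ζ (2 * c)) (z : ℕ) (P : Polynomial (Zadj ζ)) (n : ℕ)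
    (hn : (P.natDegree + 1) * (k * c) ≤ n) :
    Polynomial.cyclotomic (k * c) (Zadj ζ) ∣
      ∑ m ∈ Finset.range (n + 1), C (zeta ζ ^ m * P.eval (m : Zadj ζ)) * X ^ (z * m) *
        qbinom (Zadj ζ) n m := by
  set Φ := cyclotomic (k * c) (Zadj ζ)
  set f := Ideal.Quotient.mk (Ideal.span {Φ})
  have hX : f X ^ (k * c) = 1 := by
    rw [← map_pow, ← sub_eq_zero, ← map_one f, ← map_sub, Ideal.Quotient.eq_zero_iff_dvd]
    exact cyclotomic.dvd_X_pow_sub_one _ _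
  have hq : ∀ m, 0 < m → m < k * c → f (qbinom _ (k * c) m) = 0 := fun m h0 hm =>
    (Ideal.Quotient.eq_zero_iff_dvd _ _).2 (cyclotomic_dvd_qbinom_s9 _ h0 hm)
  have hw : zeta ζ ^ (k * c) = -1 := Subtype.ext (by
    simpa [zeta] using hζ.pow_mul_eq_neg_one_of_odd (by omega) hk)
  rw [← Ideal.Quotient.eq_zero_iff_dvd]
  exact map_qbinomSum_eq_zero (A := _ ⧸ Ideal.span {Φ}) f (zeta ζ) z (Nat.mul_pos hk.pos hc)
    hX hq hw (degree_le_natDegree.trans_lt (by exact_mod_cast P.natDegree.lt_succ_self)) hn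

theorem first_order_vanishing_general (c k : ℕ) (hc : 1 ≤ c) (hk : Odd k) (hk0 : 0 < k)
    (ζ : ℂ) (hζ : IsPrimitiveRoot ζ (2 * c)) (z : ℕ) (P : Polynomial (Zadj ζ)) (n : ℕ)
    (hn : (P.natDegree + 1) * (k * c) ≤ n) :
    Polynomial.cyclotomic (k * c) (Zadj ζ) ∣
      ∑ m ∈ Finset.range (n + 1), C (zeta ζ ^ m * P.eval (m : Zadj ζ)) * X ^ (z * m) *
        qbinom (Zadj ζ) n m :=
  first_order_vanishing_general_general c k hc hk ζ hζ z P n hn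
end

section
/- Let p be an odd prime, α ≥ 1, and 0 ≤ j < p^α. Then ∑_{m ≡ j (mod p^α), 0 ≤ m ≤ n} (-1)^{(m-j)/p^α} binom(n,m) ≡ 0 (mod p^f), where f = ∑_{t ≥ 1} ⌊ n/(2p^{α+t-1}) ⌉ and ⌊x⌉ denotes the nearest nonnegative integer to x (with ⌊x⌉ = 0 for x < 1/2 and half-integers rounding up). -/
/-!
Reducing `(X + 1) ^ n` modulo `X ^ q + 1`, `q = p ^ α`, turns `X ^ m` into
`(-1) ^ (m / q) X ^ (m % q)`, so the alternating sum is the coefficient of `X ^ j` in the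
remainder. Since `(X + 1) ^ q ≡ X ^ q + 1 (mod p)`, we have `(X + 1) ^ q ≡ p g (mod X ^ q + 1)`
for some `g ∈ ℤ[X]`, hence every coefficient of the remainder is divisible by `p ^ ⌊n / q⌋`.
Finally `f ≤ ⌊n / q⌋`: with `k = ⌊n / q⌋` the `t`-th rounding is `⌊(k + p ^ t) / (2 p ^ t)⌋`,
which equals the `(t-1)`-st one for `⌊k / p⌋`, and `⌊(k + 1) / 2⌋ + ⌊k / p⌋ ≤ k`.
-/

open Finset Polynomial

/-- The nearest-nonnegative-integer rounding function, rounding halves up. -/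
noncomputable def nround (x : ℚ) : ℕ := (⌊x + 1 / 2⌋).toNat

lemma C_dvd_X_add_one_pow_sub {p : ℕ} (hp : p.Prime) (α : ℕ) :
    C (p : ℤ) ∣ (X + 1) ^ p ^ α - (X ^ p ^ α + 1) := by
  have : Fact p.Prime := ⟨hp⟩
  rw [C_dvd_iff_dvd_coeff]
  intro i
  rw [← ZMod.intCast_zmod_eq_zero_iff_dvd, ← eq_intCast (Int.castRingHom (ZMod p)), ← coeff_map]
  simp [add_pow_char_pow]

lemma X_pow_add_one_dvd_X_pow_sub {R : Type*} [CommRing R] (q m : ℕ) :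
    (X ^ q + 1 : R[X]) ∣ X ^ m - C ((-1) ^ (m / q)) * X ^ (m % q) := by
  have h : (X ^ q - (-1) : R[X]) ∣ (X ^ q) ^ (m / q) - (-1) ^ (m / q) := sub_dvd_pow_sub_pow _ _ _
  rw [sub_neg_eq_add] at h
  have hX : (X : R[X]) ^ m = (X ^ q) ^ (m / q) * X ^ (m % q) := by
    rw [← pow_mul, ← pow_add, Nat.div_add_mod]
  rw [hX, C_pow, C_neg, C_1, ← sub_mul]
  exact h.mul_right _

section NegacyclicReduction

variable {R : Type*} [CommRing R] [Nontrivial R] {q : ℕ}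

lemma modByMonic_X_pow_add_one (hq : 0 < q) (f : R[X]) :
    f %ₘ (X ^ q + 1) =
      ∑ m ∈ range (f.natDegree + 1), C ((-1) ^ (m / q) * f.coeff m) * X ^ (m % q) := by
  have hmonic : (X ^ q + 1 : R[X]).Monic := by simpa using monic_X_pow_add_C (1 : R) hq.ne'
  have hdvd : X ^ q + 1 ∣ f - ∑ m ∈ range (f.natDegree + 1),
      C ((-1) ^ (m / q) * f.coeff m) * X ^ (m % q) := by
    nth_rewrite 1 [f.as_sum_range_C_mul_X_pow]
    rw [← sum_sub_distrib]
    refine dvd_sum fun m _ => ?_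
    convert (X_pow_add_one_dvd_X_pow_sub q m).mul_left (C (f.coeff m)) using 1
    rw [C_mul]
    ring
  have hdeg : (∑ m ∈ range (f.natDegree + 1),
      C ((-1) ^ (m / q) * f.coeff m) * X ^ (m % q)).degree < (X ^ q + 1 : R[X]).degree := by
    rw [show (X ^ q + 1 : R[X]).degree = q by simpa using degree_X_pow_add_C hq (1 : R)]
    refine (degree_sum_le _ _).trans_lt ((Finset.sup_lt_iff (WithBot.bot_lt_coe q)).2 fun m _ => ?_)
    exact (degree_C_mul_X_pow_le _ _).trans_lt (WithBot.coe_lt_coe.2 (Nat.mod_lt m hq))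
  rw [modByMonic_eq_of_dvd_sub hmonic hdvd, (modByMonic_eq_self_iff hmonic).2 hdeg]

lemma coeff_modByMonic_X_pow_add_one (hq : 0 < q) (f : R[X]) (j : ℕ) :
    (f %ₘ (X ^ q + 1)).coeff j =
      ∑ m ∈ range (f.natDegree + 1) with m % q = j, (-1) ^ (m / q) * f.coeff m := by
  rw [modByMonic_X_pow_add_one hq, finsetSum_coeff, sum_filter]
  refine sum_congr rfl fun m _ => ?_
  rw [coeff_C_mul_X_pow]
  exact if_congr eq_comm rfl rfl

end NegacyclicReduction

lemma pow_dvd_coeff_X_add_one_pow_modByMonic {p : ℕ} (hp : p.Prime) (α n j : ℕ) :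
    (p : ℤ) ^ (n / p ^ α) ∣ ((X + 1) ^ n %ₘ (X ^ p ^ α + 1)).coeff j := by
  set q := p ^ α
  have hmonic : (X ^ q + 1 : ℤ[X]).Monic := by
    simpa using monic_X_pow_add_C (1 : ℤ) (pow_ne_zero α hp.ne_zero)
  obtain ⟨g, hg⟩ := C_dvd_X_add_one_pow_sub hp α
  have hD : X ^ q + 1 ∣ (X + 1) ^ n - C ((p : ℤ) ^ (n / q)) * (g ^ (n / q) * (X + 1) ^ (n % q)) := by
    have h := sub_dvd_pow_sub_pow ((X + 1 : ℤ[X]) ^ q) (C (p : ℤ) * g) (n / q)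
    rw [show (X + 1) ^ q - C (p : ℤ) * g = X ^ q + 1 by linear_combination hg] at h
    have hX : (X + 1 : ℤ[X]) ^ n = ((X + 1) ^ q) ^ (n / q) * (X + 1) ^ (n % q) := by
      rw [← pow_mul, ← pow_add, Nat.div_add_mod]
    convert h.mul_right ((X + 1) ^ (n % q)) using 1
    rw [hX, C_pow]
    ring
  rw [modByMonic_eq_of_dvd_sub hmonic hD, ← smul_eq_C_mul, smul_modByMonic, coeff_smul,
    smul_eq_mul]
  exact dvd_mul_right _ _

lemma nround_natCast_div_two_mul (n m : ℕ) : nround ((n : ℚ) / (2 * m)) = (n + m) / (2 * m) := by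
  rcases Nat.eq_zero_or_pos m with rfl | hm
  · norm_num [nround]
  have h : (n : ℚ) / (2 * m) + 1 / 2 = ((n + m : ℕ) : ℚ) / ((2 * m : ℕ) : ℚ) := by
    push_cast
    field_simp
  rw [nround, h, Int.floor_toNat, Nat.floor_div_natCast, Nat.floor_natCast]

lemma add_mul_div_two_mul_mul (n m : ℕ) {q : ℕ} (hq : 0 < q) :
    (n + q * m) / (2 * (q * m)) = (n / q + m) / (2 * m) := by
  rw [mul_left_comm, ← Nat.div_div_eq_div_mul, Nat.add_mul_div_left _ _ hq]

lemma sum_range_add_pow_div_two_mul_pow_le {p : ℕ} (hp : 2 ≤ p) (T k : ℕ) :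
    ∑ t ∈ range T, (k + p ^ t) / (2 * p ^ t) ≤ k := by
  induction T generalizing k with
  | zero => simp
  | succ T ih =>
    have htail : ∑ t ∈ range T, (k + p ^ (t + 1)) / (2 * p ^ (t + 1)) ≤ k / p := by
      simp only [pow_succ', add_mul_div_two_mul_mul _ _ (by omega : 0 < p)]
      exact ih _
    have hkp : k / p ≤ k / 2 := Nat.div_le_div_left hp two_pos
    rw [sum_range_succ']
    simp only [pow_zero, mul_one]
    omega

lemma sum_range_nround_le {p : ℕ} (hp : 2 ≤ p) (α n T : ℕ) :
    ∑ t ∈ range T, nround ((n : ℚ) / (2 * (p : ℚ) ^ (α + t))) ≤ n / p ^ α := by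
  have hq : 0 < p ^ α := by positivity
  calc _ = ∑ t ∈ range T, (n / p ^ α + p ^ t) / (2 * p ^ t) := sum_congr rfl fun t _ => by
        rw [← add_mul_div_two_mul_mul _ _ hq, ← pow_add, ← nround_natCast_div_two_mul]
        push_cast
        rfl
    _ ≤ n / p ^ α := sum_range_add_pow_div_two_mul_pow_le hp _ _

theorem binomial_specialization_odd_general (p : ℕ) (hp : p.Prime)
    (α : ℕ) (j : ℕ) (n : ℕ) :
    ((p : ℤ) ^ (∑ t ∈ Finset.range (n + 1), nround ((n : ℚ) / (2 * (p : ℚ) ^ (α + t)))) ∣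
      ∑ m ∈ (Finset.range (n + 1)).filter (fun m => m % p ^ α = j),
        (-1 : ℤ) ^ ((m - j) / p ^ α) * (n.choose m : ℤ)) := by
  have hsum : ∑ m ∈ (range (n + 1)).filter (fun m => m % p ^ α = j),
      (-1 : ℤ) ^ ((m - j) / p ^ α) * (n.choose m : ℤ) =
        ((X + 1 : ℤ[X]) ^ n %ₘ (X ^ p ^ α + 1)).coeff j := by
    have hdeg : ((X + 1 : ℤ[X]) ^ n).natDegree = n := by
      simpa using natDegree_pow_X_add_C n (1 : ℤ)
    rw [coeff_modByMonic_X_pow_add_one (pow_pos hp.pos α), hdeg]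
    refine sum_congr rfl fun m hm => ?_
    rw [coeff_X_add_one_pow, ← (mem_filter.1 hm).2, ← Nat.div_eq_sub_mod_div]
  rw [hsum]
  exact (pow_dvd_pow _ (sum_range_nround_le hp.two_le α n (n + 1))).trans
    (pow_dvd_coeff_X_add_one_pow_modByMonic hp α n j)

theorem binomial_specialization_odd (p : ℕ) (hp : p.Prime) (hodd : Odd p)
    (α : ℕ) (hα : 1 ≤ α) (j : ℕ) (hj : j < p ^ α) (n : ℕ) :
    ((p : ℤ) ^ (∑ t ∈ Finset.range (n + 1), nround ((n : ℚ) / (2 * (p : ℚ) ^ (α + t)))) ∣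
      ∑ m ∈ (Finset.range (n + 1)).filter (fun m => m % p ^ α = j),
        (-1 : ℤ) ^ ((m - j) / p ^ α) * (n.choose m : ℤ)) :=
  binomial_specialization_odd_general p hp α j n
end

section
/- Let α ≥ 1 and 0 ≤ j < 2^α. Then ∑_{m ≡ j (mod 2^α), 0 ≤ m ≤ n} (-1)^{(m-j)/2^α} binom(n,m) ≡ 0 (mod 2^{⌊n/2^α⌋}). -/
open Finset Polynomial

/-!
Put `q = 2 ^ α`. Reducing `(1 + X) ^ n` modulo the monic polynomial `X ^ q + 1` replaces each
`X ^ m` by `(-1) ^ (m / q) X ^ (m % q)`, so the coefficient of `X ^ j` in the remainder is the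
alternating sum. On the other hand `(1 + X) ^ q = X ^ q + 1 + 2 g` (Frobenius mod 2), hence
`(1 + X) ^ n ≡ 2 ^ (n / q) g ^ (n / q) (1 + X) ^ (n % q)` modulo `X ^ q + 1`, and every coefficient of
the remainder is divisible by `2 ^ (n / q)`.
-/

namespace Polynomial

variable {R : Type*} [CommRing R]

theorem one_add_X_pow_eq_sum_range (n : ℕ) :
    ((1 : R[X]) + X) ^ n = ∑ m ∈ range (n + 1), C (n.choose m : R) * X ^ m := by
  rw [add_comm, add_pow]
  simp [mul_comm]

theorem C_dvd_one_add_X_pow_prime_pow_sub (p : ℕ) [Fact p.Prime] (α : ℕ) :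
    C (p : ℤ) ∣ (1 + X) ^ p ^ α - (X ^ p ^ α + 1) := by
  rw [C_dvd_iff_dvd_coeff]
  intro i
  rw [← ZMod.intCast_zmod_eq_zero_iff_dvd, ← eq_intCast (Int.castRingHom (ZMod p)),
    ← coeff_map]
  simp [add_pow_char_pow, add_comm]

theorem C_pow_dvd_pow_modByMonic {P Q : R[X]} (hQ : Q.Monic) {c : R} {q : ℕ}
    (hPQ : C c ∣ P ^ q - Q) (n : ℕ) : C (c ^ (n / q)) ∣ P ^ n %ₘ Q := by
  obtain ⟨g, hg⟩ := hPQ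
  have hP : P ^ n = (Q + C c * g) ^ (n / q) * P ^ (n % q) := by
    rw [← hg, add_sub_cancel, ← pow_mul, ← pow_add, Nat.div_add_mod]
  have hdvd : Q ∣ P ^ n - C (c ^ (n / q)) * (g ^ (n / q) * P ^ (n % q)) := by
    rw [hP, map_pow, ← mul_assoc, ← mul_pow, ← sub_mul]
    simpa using (sub_dvd_pow_sub_pow (Q + C c * g) (C c * g) (n / q)).mul_right (P ^ (n % q))
  rw [modByMonic_eq_of_dvd_sub hQ hdvd, ← smul_eq_C_mul, smul_modByMonic, smul_eq_C_mul]
  exact dvd_mul_right _ _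

theorem monic_X_pow_add_one {q : ℕ} (hq : 0 < q) : (X ^ q + 1 : R[X]).Monic :=
  leadingCoeff_X_pow_add_one hq

variable [Nontrivial R]

theorem X_pow_modByMonic_X_pow_add_one {q : ℕ} (hq : 0 < q) (m : ℕ) :
    (X ^ m : R[X]) %ₘ (X ^ q + 1) = C ((-1) ^ (m / q)) * X ^ (m % q) := by
  have hdvd : X ^ q + 1 ∣ (X ^ m : R[X]) - C ((-1) ^ (m / q)) * X ^ (m % q) := by
    have hXm : (X ^ m : R[X]) = (X ^ q) ^ (m / q) * X ^ (m % q) := by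
      rw [← pow_mul, ← pow_add, Nat.div_add_mod]
    rw [hXm, map_pow, map_neg, map_one, ← sub_mul]
    simpa using (sub_dvd_pow_sub_pow (X ^ q : R[X]) (-1) (m / q)).mul_right (X ^ (m % q))
  rw [modByMonic_eq_of_dvd_sub (monic_X_pow_add_one hq) hdvd,
    (modByMonic_eq_self_iff (monic_X_pow_add_one hq)).2]
  calc (C ((-1) ^ (m / q)) * X ^ (m % q) : R[X]).degree ≤ (m % q : ℕ) :=
        degree_C_mul_X_pow_le _ _
    _ < q := by exact_mod_cast Nat.mod_lt m hq
    _ = (X ^ q + 1 : R[X]).degree := by rw [← C_1, degree_X_pow_add_C hq]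

theorem coeff_sum_C_mul_X_pow_modByMonic_X_pow_add_one {q : ℕ} (hq : 0 < q) (s : Finset ℕ)
    (a : ℕ → R) (j : ℕ) :
    ((∑ m ∈ s, C (a m) * X ^ m) %ₘ (X ^ q + 1)).coeff j =
      ∑ m ∈ s with m % q = j, (-1) ^ (m / q) * a m := by
  rw [← modByMonicHom_apply, map_sum, finsetSum_coeff, sum_filter]
  refine sum_congr rfl fun m _ => ?_
  rw [← smul_eq_C_mul, map_smul, modByMonicHom_apply, X_pow_modByMonic_X_pow_add_one hq,
    coeff_smul, coeff_C_mul_X_pow]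
  split_ifs <;> simp_all [mul_comm]

end Polynomial

theorem forced_alternating_even_fleck_general (α : ℕ) (j : ℕ)
    (n : ℕ) :
    (2 : ℤ) ^ (n / 2 ^ α) ∣
      ∑ m ∈ (Finset.range (n + 1)).filter (fun m => m % 2 ^ α = j),
        (-1 : ℤ) ^ ((m - j) / 2 ^ α) * (n.choose m : ℤ) := by
  have hq : 0 < 2 ^ α := by positivity
  have hsum : ∑ m ∈ (range (n + 1)).filter (fun m => m % 2 ^ α = j),
        (-1 : ℤ) ^ ((m - j) / 2 ^ α) * (n.choose m : ℤ) =
      ((1 + X) ^ n %ₘ (X ^ 2 ^ α + 1)).coeff j := by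
    rw [one_add_X_pow_eq_sum_range, coeff_sum_C_mul_X_pow_modByMonic_X_pow_add_one hq]
    refine sum_congr rfl fun m hm => ?_
    rw [← (mem_filter.1 hm).2, ← Nat.div_eq_sub_mod_div]
  have hfrob : C (2 : ℤ) ∣ (1 + X) ^ 2 ^ α - (X ^ 2 ^ α + 1) := by
    exact_mod_cast C_dvd_one_add_X_pow_prime_pow_sub 2 α
  rw [hsum]
  exact (C_dvd_iff_dvd_coeff _ _).1 (C_pow_dvd_pow_modByMonic (monic_X_pow_add_one hq) hfrob n) j

theorem forced_alternating_even_fleck (α : ℕ) (hα : 1 ≤ α) (j : ℕ) (hj : j < 2 ^ α)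
    (n : ℕ) :
    (2 : ℤ) ^ (n / 2 ^ α) ∣
      ∑ m ∈ (Finset.range (n + 1)).filter (fun m => m % 2 ^ α = j),
        (-1 : ℤ) ^ ((m - j) / 2 ^ α) * (n.choose m : ℤ) :=
  forced_alternating_even_fleck_general α j n
end

section
/- (Fleck's congruence) If n, p are positive integers with p prime, and 0 ≤ j ≤ p-1, then ∑_{m ≡ j (mod p), 0 ≤ m ≤ n} (-1)^m binom(n,m) ≡ 0 (mod p^{⌊(n-1)/(p-1)⌋}). -/
/-!
Let `ζ` be a primitive `p`-th root of unity and `π = ζ - 1` in `ℤ[ζ]`. Filtering by roots of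
unity gives `p * S = ∑ i < p, ζ ^ (i * (p - j)) * (1 - ζ ^ i) ^ n`, and `π` divides each
`1 - ζ ^ i`, so `π ^ n ∣ p * S`. Since `p` is a unit times `π ^ (p - 1)` and `π ∣ t` forces `p ∣ t`
for integers `t`, each factor `p` of `S` absorbs `p - 1` factors of `π`, whence
`p ^ ⌊(n - 1) / (p - 1)⌋ ∣ S`.
-/

open Finset NumberField

theorem Nat.dvd_add_sub_iff_mod_eq {k j : ℕ} (hj : j < k) (m : ℕ) :
    k ∣ m + (k - j) ↔ m % k = j := by
  have hk : j + (k - j) ≡ 0 [MOD k] := by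
    rw [Nat.add_sub_cancel' hj.le, Nat.modEq_zero_iff_dvd]
  calc k ∣ m + (k - j) ↔ m + (k - j) ≡ j + (k - j) [MOD k] := by
        rw [← Nat.modEq_zero_iff_dvd]; exact ⟨fun h => h.trans hk.symm, fun h => h.trans hk⟩
    _ ↔ m ≡ j [MOD k] := Nat.ModEq.add_iff_right rfl
    _ ↔ m % k = j := by rw [Nat.ModEq, Nat.mod_eq_of_lt hj]

theorem one_sub_pow_eq_sum {R : Type*} [CommRing R] (x : R) (n : ℕ) :
    (1 - x) ^ n = ∑ m ∈ range (n + 1), (-1) ^ m * (n.choose m : R) * x ^ m := by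
  rw [sub_eq_neg_add, add_pow]
  refine sum_congr rfl fun m _ => ?_
  rw [one_pow, neg_pow]
  ring

namespace IsPrimitiveRoot

variable {R : Type*} [CommRing R] [IsDomain R] {ζ : R} {k : ℕ}

theorem sum_range_pow_mul (hζ : IsPrimitiveRoot ζ k) (m : ℕ) :
    ∑ i ∈ range k, ζ ^ (i * m) = if k ∣ m then (k : R) else 0 := by
  simp_rw [mul_comm _ m, pow_mul]
  split_ifs with hkm
  · simp [(hζ.pow_eq_one_iff_dvd m).mpr hkm]
  · have hroot : (ζ ^ m) ^ k = 1 := by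
      rw [← pow_mul, mul_comm, pow_mul, hζ.pow_eq_one, one_pow]
    have hne : ζ ^ m - 1 ≠ 0 := sub_ne_zero.mpr fun h => hkm ((hζ.pow_eq_one_iff_dvd m).mp h)
    apply mul_right_cancel₀ hne
    rw [geom_sum_mul, hroot, sub_self, zero_mul]

theorem mul_sum_filter_mod_eq (hζ : IsPrimitiveRoot ζ k) {j : ℕ} (hj : j < k)
    (s : Finset ℕ) (f : ℕ → R) :
    k * ∑ m ∈ s with m % k = j, f m
      = ∑ i ∈ range k, ζ ^ (i * (k - j)) * ∑ m ∈ s, f m * ζ ^ (i * m) := by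
  have hterm : ∀ i m,
      ζ ^ (i * (k - j)) * (f m * ζ ^ (i * m)) = f m * ζ ^ (i * (m + (k - j))) := by
    intro i m
    ring
  simp_rw [mul_sum, hterm]
  rw [sum_comm]
  simp_rw [← mul_sum, hζ.sum_range_pow_mul, Nat.dvd_add_sub_iff_mod_eq hj, mul_ite, mul_zero,
    ← sum_filter, mul_sum]
  exact sum_congr rfl fun _ _ => mul_comm _ _

end IsPrimitiveRoot

section UniformizerAbove

variable {R : Type*} [CommRing R] [IsDomain R] {π : R} {p : ℕ}

theorem Int.pow_dvd_of_pow_dvd_natCast_mul (hp : (p : R) ≠ 0)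
    (hπp : Associated (π ^ (p - 1)) (p : R)) (hπ : ∀ t : ℤ, π ∣ (t : R) → (p : ℤ) ∣ t)
    (e : ℕ) {t : ℤ} (h : π ^ (e * (p - 1) + 1) ∣ (p : R) * t) : (p : ℤ) ^ e ∣ t := by
  induction e generalizing t with
  | zero => simp
  | succ e ih =>
    have hπt : π ^ (e * (p - 1) + 1) ∣ (t : R) := by
      have hassoc := hπp.mul_left (π ^ (e * (p - 1) + 1))
      rw [show (e + 1) * (p - 1) + 1 = e * (p - 1) + 1 + (p - 1) by ring, pow_add,
        hassoc.dvd_iff_dvd_left, mul_comm, mul_dvd_mul_iff_left hp] at h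
      exact h
    obtain ⟨t', rfl⟩ := hπ t ((dvd_pow_self π (Nat.succ_ne_zero _)).trans hπt)
    push_cast at hπt
    rw [pow_succ']
    exact mul_dvd_mul_left _ (ih hπt)

theorem Int.pow_div_dvd_of_pow_dvd_natCast_mul (hp : (p : R) ≠ 0)
    (hπp : Associated (π ^ (p - 1)) (p : R)) (hπ : ∀ t : ℤ, π ∣ (t : R) → (p : ℤ) ∣ t)
    {n : ℕ} {t : ℤ} (h : π ^ n ∣ (p : R) * t) : (p : ℤ) ^ ((n - 1) / (p - 1)) ∣ t := by
  rcases n.eq_zero_or_pos with rfl | hn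
  · simp
  · refine Int.pow_dvd_of_pow_dvd_natCast_mul hp hπp hπ _ ((pow_dvd_pow π ?_).trans h)
    have := Nat.div_mul_le_self (n - 1) (p - 1)
    omega

end UniformizerAbove

theorem fleck_congruence_general (n p : ℕ) (hp : p.Prime) (j : ℕ) (hj : j ≤ p - 1) :
    (p : ℤ) ^ ((n - 1) / (p - 1)) ∣
      ∑ m ∈ (Finset.range (n + 1)).filter (fun m => m % p = j),
        (-1 : ℤ) ^ m * (n.choose m : ℤ) := by
  have : Fact p.Prime := ⟨hp⟩
  have : NeZero p := ⟨hp.ne_zero⟩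
  -- not found by `inferInstance`: the goal's `Algebra ℚ` is `DivisionRing.toRatAlgebra`, which
  -- agrees with the algebra structure of `CyclotomicField` only after unfolding
  have : IsCyclotomicExtension {p} ℚ (CyclotomicField p ℚ) :=
    CyclotomicField.isCyclotomicExtension p ℚ
  have hζ := IsCyclotomicExtension.zeta_spec p ℚ (CyclotomicField p ℚ)
  have hfilter := hζ.toInteger_isPrimitiveRoot.mul_sum_filter_mod_eq
    (by have := hp.pos; omega : j < p) (range (n + 1)) fun m => (-1) ^ m * (n.choose m : 𝓞 _)
  set ζ := hζ.toInteger
  refine Int.pow_div_dvd_of_pow_dvd_natCast_mul (π := ζ - 1) (by exact_mod_cast hp.ne_zero)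
    (IsCyclotomicExtension.Rat.associated_zeta_sub_one_pow_prime p hζ)
    (fun t => (IsCyclotomicExtension.Rat.zeta_sub_one_dvd_intCast_iff' p hζ).mp) ?_
  push_cast
  rw [hfilter]
  refine dvd_sum fun i _ => dvd_mul_of_dvd_right ?_ _
  simp_rw [pow_mul ζ i, ← one_sub_pow_eq_sum]
  exact pow_dvd_pow_of_dvd (dvd_sub_comm.mp (sub_one_dvd_pow_sub_one ζ i)) n

/-- Fleck's congruence. -/
theorem fleck_congruence (n p : ℕ) (hn : 0 < n) (hp : p.Prime) (j : ℕ) (hj : j ≤ p - 1) :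
    (p : ℤ) ^ ((n - 1) / (p - 1)) ∣
      ∑ m ∈ (Finset.range (n + 1)).filter (fun m => m % p = j),
        (-1 : ℤ) ^ m * (n.choose m : ℤ) :=
  fleck_congruence_general n p hp j hj
end
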